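/- There exists a constant L > 0, depending only on n, |S|, |A|, r_max, and τ, such that for every player i, every state s, every action a_i ∈ A_i, and all policy profiles π, π' ∈ Π, |p_π(s) \bar{adv}^π_i(s,a_i) − p_{π'}(s) \bar{adv}^{π'}_i(s,a_i)| ≤ L ‖π − π'‖_∞; that is, each component of the individual payoff gradient v_i(π) is Lipschitz continuous in the policy profile. -/

import Mathlib

open Matrix BigOperators

noncomputable section

variable {n : ℕ} {S : Type} [Fintype S] [DecidableEq S]
  {A : Fin n → Type} [∀ i, Fintype (A i)] [∀ i, DecidableEq (A i)]

/-- A stationary policy profile: each player `i` assigns to each state a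
probability distribution on her action set `A i`. -/
def IsPolicyProfile (π : ∀ i : Fin n, S → A i → ℝ) : Prop :=
  (∀ i s a, 0 ≤ π i s a) ∧ (∀ i s, ∑ a, π i s a = 1)

/-- Transition probabilities `ℙ[s' | s, a]`. -/
def IsTransition (T : S → (∀ i, A i) → S → ℝ) : Prop :=
  (∀ s a s', 0 ≤ T s a s') ∧ (∀ s a, ∑ s', T s a s' = 1)

/-- A probability distribution on `S` (as a row vector). -/
def IsDist (w : S → ℝ) : Prop := (∀ s, 0 ≤ w s) ∧ ∑ s, w s = 1

/-- The transition matrix induced by a policy profile: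
`P_π(s'|s) = ∑_a ℙ[s'|s,a] ∏_j π_j(a_j|s)`. -/
def Pmat (T : S → (∀ i, A i) → S → ℝ) (π : ∀ i : Fin n, S → A i → ℝ) :
    Matrix S S ℝ :=
  fun s s' => ∑ a : ∀ i, A i, T s a s' * ∏ i, π i s (a i)

/-- Sup-norm distance between two policy profiles. -/
def polDist (π π' : ∀ i : Fin n, S → A i → ℝ) : ℝ :=
  ⨆ i, ⨆ s, ⨆ a, |π i s a - π' i s a|

/-- ℓ¹-norm on ℝ^S. -/
def l1 (w : S → ℝ) : ℝ := ∑ s, |w s|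

/-- The expected one-step reward vector `R_i^π`. -/
def Rvec (r : S → (∀ i, A i) → ℝ) (π : ∀ i : Fin n, S → A i → ℝ) : S → ℝ :=
  fun s => ∑ a : ∀ i, A i, (∏ j, π j s (a j)) * r s a

/-- The long-run average value `V_i(π) = ∑_s p_π(s) R_i^π(s)`, where `p` is the
stationary distribution of `P_π`. -/
def Vval (p : S → ℝ) (R : S → ℝ) : ℝ := ∑ s, p s * R s

/-- The uniform mixing assumption with mixing time `τ`. -/
def Mixing (T : S → (∀ i, A i) → S → ℝ) (τ : ℝ) : Prop :=
  ∀ π : ∀ i : Fin n, S → A i → ℝ, IsPolicyProfile π →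
    ∀ w w' : S → ℝ, IsDist w → IsDist w' →
      l1 ((w - w') ᵥ* Pmat T π) ≤ Real.exp (-(1 / τ)) * l1 (w - w')

/-- The advantage function
`adv^π_i(s,a) = r_i(s,a) − V_i(π) + ∑_{t≥1} ((e_s − p_π) P_π^t) R_i^π`. -/
def adv (T : S → (∀ i, A i) → S → ℝ) (r : S → (∀ i, A i) → ℝ)
    (π : ∀ i : Fin n, S → A i → ℝ) (p : S → ℝ) (s : S) (a : ∀ i, A i) : ℝ :=
  r s a - Vval p (Rvec r π)
    + ∑' t : ℕ, ((Pi.single s 1 - p) ᵥ* (Pmat T π ^ (t + 1))) ⬝ᵥ (Rvec r π)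

/-- The average advantage function
`\bar adv^π_i(s, a_i) = ∑_{a_{-i}} (∏_{j≠i} π_j(a_j|s)) adv^π_i(s,(a_i,a_{-i}))`. -/
def avgAdv (T : S → (∀ i, A i) → S → ℝ) (r : S → (∀ i, A i) → ℝ)
    (π : ∀ i : Fin n, S → A i → ℝ) (p : S → ℝ) (i : Fin n) (s : S) (ai : A i) : ℝ :=
  ∑ a : ∀ j, A j,
    if a i = ai then (∏ j ∈ Finset.univ.erase i, π j s (a j)) * adv T r π p s a
    else 0

/-!
Uniform mixing makes every `P_π` contract the `ℓ¹` norm of zero-sum row vectors by the factor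
`c = e^{-1/τ} < 1`, and `P_π` depends Lipschitz-continuously on `π`, since a product of
probabilities moves by at most the sum of the moves of its factors. The identity
`p - p' = (p - p') P_{π'} + p (P_π - P_{π'})` then bounds `‖p - p'‖₁` by `(1 - c)⁻¹` times the
perturbation of the transition matrix, and the reward vector and the value inherit the Lipschitz
bound. Writing `P^{t+1} - P'^{t+1}` as a telescoping sum bounds the variation of the `t`-th term
of the advantage series by `(t + 1) cᵗ` times the policy distance, which is summable. The average
advantage and the payoff gradient are sums of products of bounded Lipschitz factors.
-/

open Finset

lemma abs_mul_sub_mul_le (a b a' b' : ℝ) :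
    |a * b - a' * b'| ≤ |a - a'| * |b| + |a'| * |b - b'| := by
  rw [← abs_mul, ← abs_mul, show a * b - a' * b' = (a - a') * b + a' * (b - b') by ring]
  exact abs_add_le _ _

lemma abs_le_of_mem_Icc {x b : ℝ} (h : x ∈ Set.Icc 0 b) : |x| ≤ b :=
  (abs_of_nonneg h.1).trans_le h.2

lemma prod_mem_Icc_zero_one {ι : Type*} {t : Finset ι} {f : ι → ℝ}
    (hf : ∀ i ∈ t, f i ∈ Set.Icc (0 : ℝ) 1) : ∏ i ∈ t, f i ∈ Set.Icc (0 : ℝ) 1 :=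
  ⟨prod_nonneg fun i hi => (hf i hi).1,
    prod_le_one (fun i hi => (hf i hi).1) fun i hi => (hf i hi).2⟩

lemma abs_prod_sub_prod_le {ι : Type*} (t : Finset ι) {f g : ι → ℝ}
    (hf : ∀ i ∈ t, f i ∈ Set.Icc (0 : ℝ) 1) (hg : ∀ i ∈ t, g i ∈ Set.Icc (0 : ℝ) 1) :
    |∏ i ∈ t, f i - ∏ i ∈ t, g i| ≤ ∑ i ∈ t, |f i - g i| := by
  induction t using Finset.cons_induction with
  | empty => simp
  | cons a t ha ih =>
    rw [forall_mem_cons] at hf hg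
    rw [prod_cons, prod_cons, sum_cons]
    calc _ ≤ |f a - g a| * |∏ i ∈ t, f i| + |g a| * |∏ i ∈ t, f i - ∏ i ∈ t, g i| :=
          abs_mul_sub_mul_le _ _ _ _
      _ ≤ |f a - g a| * 1 + 1 * ∑ i ∈ t, |f i - g i| :=
          add_le_add (mul_le_mul_of_nonneg_left (abs_le_of_mem_Icc (prod_mem_Icc_zero_one hf.2))
            (abs_nonneg _)) (mul_le_mul (abs_le_of_mem_Icc hg.1) (ih hf.2 hg.2) (abs_nonneg _)
            zero_le_one)
      _ = _ := by ring

lemma pow_succ_le_succ_mul_pow {c : ℝ} (hc0 : 0 ≤ c) (hc1 : c ≤ 1) (t : ℕ) :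
    c ^ (t + 1) ≤ (t + 1) * c ^ t :=
  (pow_le_pow_of_le_one hc0 hc1 t.le_succ).trans
    (le_mul_of_one_le_left (pow_nonneg hc0 t) (by linarith [t.cast_nonneg (α := ℝ)]))

lemma hasSum_succ_mul_geometric {c : ℝ} (hc0 : 0 ≤ c) (hc1 : c < 1) :
    HasSum (fun t : ℕ => ((t : ℝ) + 1) * c ^ t) ((1 - c)⁻¹ ^ 2) := by
  simpa [inv_pow] using
    hasSum_choose_mul_geometric_of_norm_lt_one 1 (r := c) (by rwa [Real.norm_of_nonneg hc0])

section Markov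

variable {ι : Type} [Fintype ι]

lemma l1_nonneg (w : ι → ℝ) : 0 ≤ l1 w :=
  sum_nonneg fun _ _ => abs_nonneg _

lemma abs_le_l1 (w : ι → ℝ) (i : ι) : |w i| ≤ l1 w :=
  single_le_sum (fun j _ => abs_nonneg (w j)) (mem_univ i)

lemma l1_add_le (u v : ι → ℝ) : l1 (u + v) ≤ l1 u + l1 v := by
  rw [l1, l1, l1, ← sum_add_distrib]
  exact sum_le_sum fun _ _ => abs_add_le _ _

lemma l1_sub_le (u v : ι → ℝ) : l1 (u - v) ≤ l1 u + l1 v := by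
  rw [l1, l1, l1, ← sum_add_distrib]
  exact sum_le_sum fun _ _ => abs_sub _ _

lemma l1_sub_comm (u v : ι → ℝ) : l1 (u - v) = l1 (v - u) := by
  simp only [l1, Pi.sub_apply, abs_sub_comm]

lemma l1_smul (a : ℝ) (w : ι → ℝ) : l1 (a • w) = |a| * l1 w := by
  simp [l1, abs_mul, mul_sum]

lemma IsDist.l1_eq_one {w : ι → ℝ} (hw : IsDist w) : l1 w = 1 := by
  rw [l1, ← hw.2]
  exact sum_congr rfl fun i _ => abs_of_nonneg (hw.1 i)

lemma IsDist.sum_sub_eq_zero {w w' : ι → ℝ} (hw : IsDist w) (hw' : IsDist w') :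
    ∑ i, (w - w') i = 0 := by
  simp [sum_sub_distrib, hw.2, hw'.2]

lemma IsDist.l1_sub_le_two {w w' : ι → ℝ} (hw : IsDist w) (hw' : IsDist w') :
    l1 (w - w') ≤ 2 := by
  linarith [l1_sub_le w w', hw.l1_eq_one, hw'.l1_eq_one]

lemma isDist_single [DecidableEq ι] (i : ι) : IsDist (Pi.single i 1 : ι → ℝ) :=
  single_mem_stdSimplex ℝ i

lemma IsDist.dotProduct_mem_Icc {w R : ι → ℝ} {b : ℝ} (hw : IsDist w)
    (hR : ∀ i, R i ∈ Set.Icc 0 b) : w ⬝ᵥ R ∈ Set.Icc 0 b :=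
  (convex_Icc 0 b).sum_mem (fun i _ => hw.1 i) hw.2 fun i _ => hR i

lemma abs_dotProduct_le {x R : ι → ℝ} {B : ℝ} (hR : ∀ i, |R i| ≤ B) :
    |x ⬝ᵥ R| ≤ l1 x * B := by
  rw [dotProduct, l1, sum_mul]
  refine (abs_sum_le_sum_abs _ _).trans (sum_le_sum fun i _ => ?_)
  rw [abs_mul]
  exact mul_le_mul_of_nonneg_left (hR i) (abs_nonneg _)

lemma abs_dotProduct_sub_dotProduct_le {x x' R R' : ι → ℝ} {B ε : ℝ}
    (hR : ∀ i, |R i| ≤ B) (hRR' : ∀ i, |R i - R' i| ≤ ε) :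
    |x ⬝ᵥ R - x' ⬝ᵥ R'| ≤ l1 (x - x') * B + l1 x' * ε := by
  rw [show x ⬝ᵥ R - x' ⬝ᵥ R' = (x - x') ⬝ᵥ R + x' ⬝ᵥ (R - R') by
    simp only [sub_dotProduct, dotProduct_sub]; ring]
  exact (abs_add_le _ _).trans
    (add_le_add (abs_dotProduct_le hR) (abs_dotProduct_le fun i => hRR' i))

lemma l1_vecMul_le {x : ι → ℝ} {M : Matrix ι ι ℝ} {δ : ℝ} (hM : ∀ i, ∑ j, |M i j| ≤ δ) :
    l1 (x ᵥ* M) ≤ l1 x * δ := by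
  calc l1 (x ᵥ* M) ≤ ∑ j, ∑ i, |x i| * |M i j| := by
        refine sum_le_sum fun j _ => (abs_sum_le_sum_abs _ _).trans_eq ?_
        simp only [abs_mul]
    _ = ∑ i, |x i| * ∑ j, |M i j| := by rw [sum_comm]; simp only [mul_sum]
    _ ≤ l1 x * δ := by
        rw [l1, sum_mul]
        exact sum_le_sum fun i _ => mul_le_mul_of_nonneg_left (hM i) (abs_nonneg _)

-- The positive and negative parts of `x`, normalised, are the two distributions.
lemma exists_eq_smul_sub_of_sum_eq_zero {x : ι → ℝ} (hx : ∑ i, x i = 0) (hx0 : x ≠ 0) :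
    ∃ (m : ℝ) (w w' : ι → ℝ), 0 ≤ m ∧ IsDist w ∧ IsDist w' ∧ x = m • (w - w') := by
  set m := ∑ i, (x i)⁺
  have hm : 0 < m := by
    refine (sum_nonneg fun i _ => posPart_nonneg (x i)).lt_of_ne' fun hm0 => hx0 ?_
    have hle : ∀ i ∈ univ, x i ≤ 0 := fun i hi =>
      posPart_eq_zero.1 ((sum_eq_zero_iff_of_nonneg fun j _ => posPart_nonneg (x j)).1 hm0 i hi)
    exact funext fun i => (sum_eq_zero_iff_of_nonpos hle).1 hx i (mem_univ i)
  have hneg : ∑ i, (x i)⁻ = m := by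
    have : ∑ i, x i = m - ∑ i, (x i)⁻ := by
      rw [← sum_sub_distrib]; simp only [posPart_sub_negPart]
    linarith
  refine ⟨m, fun i => (x i)⁺ / m, fun i => (x i)⁻ / m, hm.le,
    ⟨fun i => div_nonneg (posPart_nonneg _) hm.le, by rw [← sum_div, div_self hm.ne']⟩,
    ⟨fun i => div_nonneg (negPart_nonneg _) hm.le, by rw [← sum_div, hneg, div_self hm.ne']⟩, ?_⟩
  funext i
  simp only [Pi.smul_apply, Pi.sub_apply, smul_eq_mul]
  rw [← sub_div, mul_div_cancel₀ _ hm.ne', posPart_sub_negPart]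

variable {M N : Matrix ι ι ℝ} {c δ : ℝ}

def ContractsZeroSum (M : Matrix ι ι ℝ) (c : ℝ) : Prop :=
  ∀ x : ι → ℝ, ∑ i, x i = 0 → l1 (x ᵥ* M) ≤ c * l1 x

lemma contractsZeroSum_of_isDist
    (h : ∀ w w', IsDist w → IsDist w' → l1 ((w - w') ᵥ* M) ≤ c * l1 (w - w')) :
    ContractsZeroSum M c := by
  intro x hx
  rcases eq_or_ne x 0 with rfl | hx0
  · simp [l1]
  obtain ⟨m, w, w', hm, hw, hw', rfl⟩ := exists_eq_smul_sub_of_sum_eq_zero hx hx0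
  rw [smul_vecMul, l1_smul, l1_smul, abs_of_nonneg hm, mul_left_comm]
  exact mul_le_mul_of_nonneg_left (h w w' hw hw') hm

lemma l1_sub_le_of_stationary (hNc : ContractsZeroSum N c) (hc1 : c < 1)
    (hMN : ∀ i, ∑ j, |M i j - N i j| ≤ δ) {p p' : ι → ℝ} (hp : IsDist p) (hpM : p ᵥ* M = p)
    (hp' : IsDist p') (hp'N : p' ᵥ* N = p') :
    l1 (p - p') ≤ (1 - c)⁻¹ * δ := by
  have hsplit : p - p' = (p - p') ᵥ* N + p ᵥ* (M - N) := by
    rw [sub_vecMul, vecMul_sub, hpM, hp'N]; abel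
  have h : l1 (p - p') ≤ c * l1 (p - p') + δ :=
    calc l1 (p - p') = l1 ((p - p') ᵥ* N + p ᵥ* (M - N)) := congrArg l1 hsplit
      _ ≤ l1 ((p - p') ᵥ* N) + l1 (p ᵥ* (M - N)) := l1_add_le _ _
      _ ≤ c * l1 (p - p') + l1 p * δ :=
          add_le_add (hNc _ (hp.sum_sub_eq_zero hp')) (l1_vecMul_le hMN)
      _ = _ := by rw [hp.l1_eq_one, one_mul]
  rw [le_inv_mul_iff₀ (sub_pos.2 hc1)]
  linarith

variable [DecidableEq ι]

lemma sum_vecMul_of_mem_rowStochastic (hM : M ∈ rowStochastic ℝ ι) (x : ι → ℝ) :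
    ∑ j, (x ᵥ* M) j = ∑ i, x i := by
  rw [← dotProduct_one, ← dotProduct_one, ← dotProduct_mulVec,
    one_vecMul_of_mem_rowStochastic hM]

lemma ContractsZeroSum.pow (h : ContractsZeroSum M c) (hM : M ∈ rowStochastic ℝ ι)
    (hc : 0 ≤ c) : ∀ k : ℕ, ContractsZeroSum (M ^ k) (c ^ k)
  | 0 => fun x _ => by simp
  | k + 1 => fun x hx => by
    have hxk : ∑ i, (x ᵥ* M ^ k) i = 0 := by
      rw [sum_vecMul_of_mem_rowStochastic (pow_mem hM k), hx]
    calc l1 (x ᵥ* M ^ (k + 1)) = l1 ((x ᵥ* M ^ k) ᵥ* M) := by rw [vecMul_vecMul, pow_succ]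
      _ ≤ c * l1 (x ᵥ* M ^ k) := h _ hxk
      _ ≤ c * (c ^ k * l1 x) := mul_le_mul_of_nonneg_left (h.pow hM hc k x hx) hc
      _ = c ^ (k + 1) * l1 x := by ring

lemma l1_vecMul_pow_sub_pow_le (hM : M ∈ rowStochastic ℝ ι) (hN : N ∈ rowStochastic ℝ ι)
    (hMc : ContractsZeroSum M c) (hNc : ContractsZeroSum N c) (hc : 0 ≤ c) (hδ : 0 ≤ δ)
    (hMN : ∀ i, ∑ j, |M i j - N i j| ≤ δ) {x : ι → ℝ} (hx : ∑ i, x i = 0) (k : ℕ) :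
    l1 (x ᵥ* (M ^ (k + 1) - N ^ (k + 1))) ≤ (k + 1) * c ^ k * δ * l1 x := by
  induction k generalizing x with
  | zero =>
    simp only [zero_add, pow_one, pow_zero, Nat.cast_zero, one_mul]
    rw [mul_comm]
    exact l1_vecMul_le hMN
  | succ k ih =>
    have hsplit : M ^ (k + 1 + 1) - N ^ (k + 1 + 1)
        = M * (M ^ (k + 1) - N ^ (k + 1)) + (M - N) * N ^ (k + 1) := by
      rw [mul_sub, sub_mul, ← pow_succ', ← pow_succ']; abel
    have hxM : ∑ i, (x ᵥ* M) i = 0 := by rw [sum_vecMul_of_mem_rowStochastic hM, hx]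
    have hxMN : ∑ i, (x ᵥ* (M - N)) i = 0 := by
      simp only [vecMul_sub, Pi.sub_apply, sum_sub_distrib, sum_vecMul_of_mem_rowStochastic hM,
        sum_vecMul_of_mem_rowStochastic hN, sub_self]
    have hcoef : 0 ≤ (k + 1) * c ^ k * δ := by positivity
    rw [hsplit, vecMul_add, ← vecMul_vecMul, ← vecMul_vecMul]
    calc _ ≤ l1 ((x ᵥ* M) ᵥ* (M ^ (k + 1) - N ^ (k + 1))) + l1 ((x ᵥ* (M - N)) ᵥ* N ^ (k + 1)) :=
          l1_add_le _ _
      _ ≤ (k + 1) * c ^ k * δ * (c * l1 x) + c ^ (k + 1) * (l1 x * δ) :=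
          add_le_add ((ih hxM).trans (mul_le_mul_of_nonneg_left (hMc x hx) hcoef))
            ((hNc.pow hN hc (k + 1) _ hxMN).trans
              (mul_le_mul_of_nonneg_left (l1_vecMul_le hMN) (pow_nonneg hc _)))
      _ = _ := by push_cast; ring

variable {B ε : ℝ} {x x' R R' : ι → ℝ}

def deviationSum (M : Matrix ι ι ℝ) (x R : ι → ℝ) : ℝ :=
  ∑' t : ℕ, (x ᵥ* M ^ (t + 1)) ⬝ᵥ R

lemma abs_vecMul_pow_dotProduct_le (hM : M ∈ rowStochastic ℝ ι) (hMc : ContractsZeroSum M c)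
    (hc0 : 0 ≤ c) (hc1 : c ≤ 1) (hx : ∑ i, x i = 0) (hR : ∀ i, |R i| ≤ B) (hB : 0 ≤ B)
    (t : ℕ) : |(x ᵥ* M ^ (t + 1)) ⬝ᵥ R| ≤ c ^ t * (l1 x * B) :=
  calc _ ≤ l1 (x ᵥ* M ^ (t + 1)) * B := abs_dotProduct_le hR
    _ ≤ (c ^ t * l1 x) * B := mul_le_mul_of_nonneg_right ((hMc.pow hM hc0 _ x hx).trans
          (mul_le_mul_of_nonneg_right (pow_le_pow_of_le_one hc0 hc1 t.le_succ) (l1_nonneg x))) hB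
    _ = _ := mul_assoc _ _ _

lemma summable_vecMul_pow_dotProduct (hM : M ∈ rowStochastic ℝ ι)
    (hMc : ContractsZeroSum M c) (hc0 : 0 ≤ c) (hc1 : c < 1) (hx : ∑ i, x i = 0)
    (hR : ∀ i, |R i| ≤ B) (hB : 0 ≤ B) : Summable fun t : ℕ => (x ᵥ* M ^ (t + 1)) ⬝ᵥ R :=
  ((summable_geometric_of_lt_one hc0 hc1).mul_right _).of_norm_bounded
    (abs_vecMul_pow_dotProduct_le hM hMc hc0 hc1.le hx hR hB)

lemma abs_deviationSum_le (hM : M ∈ rowStochastic ℝ ι) (hMc : ContractsZeroSum M c)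
    (hc0 : 0 ≤ c) (hc1 : c < 1) (hx : ∑ i, x i = 0) (hR : ∀ i, |R i| ≤ B) (hB : 0 ≤ B) :
    |deviationSum M x R| ≤ (1 - c)⁻¹ * (l1 x * B) :=
  tsum_of_norm_bounded (f := fun t => (x ᵥ* M ^ (t + 1)) ⬝ᵥ R)
    ((hasSum_geometric_of_lt_one hc0 hc1).mul_right _)
    (abs_vecMul_pow_dotProduct_le hM hMc hc0 hc1.le hx hR hB)

lemma abs_vecMul_pow_dotProduct_sub_le (hM : M ∈ rowStochastic ℝ ι)
    (hN : N ∈ rowStochastic ℝ ι) (hMc : ContractsZeroSum M c) (hNc : ContractsZeroSum N c)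
    (hc0 : 0 ≤ c) (hc1 : c ≤ 1) (hδ : 0 ≤ δ) (hMN : ∀ i, ∑ j, |M i j - N i j| ≤ δ)
    (hx : ∑ i, x i = 0) (hx' : ∑ i, x' i = 0) (hR : ∀ i, |R i| ≤ B) (hB : 0 ≤ B)
    (hRR' : ∀ i, |R i - R' i| ≤ ε) (hε : 0 ≤ ε) (t : ℕ) :
    |(x ᵥ* M ^ (t + 1)) ⬝ᵥ R - (x' ᵥ* N ^ (t + 1)) ⬝ᵥ R'| ≤
      (t + 1) * c ^ t * ((l1 (x - x') + δ * l1 x') * B + l1 x' * ε) := by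
  have hpow := pow_succ_le_succ_mul_pow hc0 hc1 t
  have hxx' : ∑ i, (x - x') i = 0 := by simp [sum_sub_distrib, hx, hx']
  have hvec : l1 (x ᵥ* M ^ (t + 1) - x' ᵥ* N ^ (t + 1)) ≤
      (t + 1) * c ^ t * (l1 (x - x') + δ * l1 x') :=
    calc _ = l1 ((x - x') ᵥ* M ^ (t + 1) + x' ᵥ* (M ^ (t + 1) - N ^ (t + 1))) := by
          rw [sub_vecMul, vecMul_sub]; abel_nf
      _ ≤ c ^ (t + 1) * l1 (x - x') + (t + 1) * c ^ t * δ * l1 x' :=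
          (l1_add_le _ _).trans (add_le_add (hMc.pow hM hc0 _ _ hxx')
            (l1_vecMul_pow_sub_pow_le hM hN hMc hNc hc0 hδ hMN hx' t))
      _ ≤ (t + 1) * c ^ t * l1 (x - x') + (t + 1) * c ^ t * δ * l1 x' := by
          gcongr; exact l1_nonneg _
      _ = _ := by ring
  have hvec' : l1 (x' ᵥ* N ^ (t + 1)) ≤ (t + 1) * c ^ t * l1 x' :=
    (hNc.pow hN hc0 _ _ hx').trans (mul_le_mul_of_nonneg_right hpow (l1_nonneg _))
  calc _ ≤ l1 (x ᵥ* M ^ (t + 1) - x' ᵥ* N ^ (t + 1)) * B + l1 (x' ᵥ* N ^ (t + 1)) * ε :=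
        abs_dotProduct_sub_dotProduct_le hR hRR'
    _ ≤ (t + 1) * c ^ t * (l1 (x - x') + δ * l1 x') * B + (t + 1) * c ^ t * l1 x' * ε :=
        add_le_add (mul_le_mul_of_nonneg_right hvec hB) (mul_le_mul_of_nonneg_right hvec' hε)
    _ = _ := by ring

lemma abs_deviationSum_sub_le (hM : M ∈ rowStochastic ℝ ι) (hN : N ∈ rowStochastic ℝ ι)
    (hMc : ContractsZeroSum M c) (hNc : ContractsZeroSum N c) (hc0 : 0 ≤ c) (hc1 : c < 1)
    (hδ : 0 ≤ δ) (hMN : ∀ i, ∑ j, |M i j - N i j| ≤ δ) (hx : ∑ i, x i = 0)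
    (hx' : ∑ i, x' i = 0) (hR : ∀ i, |R i| ≤ B) (hR' : ∀ i, |R' i| ≤ B) (hB : 0 ≤ B)
    (hRR' : ∀ i, |R i - R' i| ≤ ε) (hε : 0 ≤ ε) :
    |deviationSum M x R - deviationSum N x' R'| ≤
      (1 - c)⁻¹ ^ 2 * ((l1 (x - x') + δ * l1 x') * B + l1 x' * ε) := by
  rw [deviationSum, deviationSum,
    ← (summable_vecMul_pow_dotProduct hM hMc hc0 hc1 hx hR hB).tsum_sub
      (summable_vecMul_pow_dotProduct hN hNc hc0 hc1 hx' hR' hB)]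
  exact tsum_of_norm_bounded
    (f := fun t => (x ᵥ* M ^ (t + 1)) ⬝ᵥ R - (x' ᵥ* N ^ (t + 1)) ⬝ᵥ R')
    ((hasSum_succ_mul_geometric hc0 hc1).mul_right _)
    (abs_vecMul_pow_dotProduct_sub_le hM hN hMc hNc hc0 hc1.le hδ hMN hx hx' hR hB hRR' hε)

end Markov

section Game

variable {n : ℕ} {S : Type} {A : Fin n → Type} {π π' : ∀ i : Fin n, S → A i → ℝ}

lemma polDist_nonneg : 0 ≤ polDist π π' :=
  Real.iSup_nonneg fun _ => Real.iSup_nonneg fun _ => Real.iSup_nonneg fun _ => abs_nonneg _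

variable [∀ i, Fintype (A i)] {r : S → (∀ i, A i) → ℝ} {rmax : ℝ}

lemma IsPolicyProfile.mem_Icc (hπ : IsPolicyProfile π) (i : Fin n) (s : S) (a : A i) :
    π i s a ∈ Set.Icc (0 : ℝ) 1 :=
  ⟨hπ.1 i s a, by rw [← hπ.2 i s]; exact single_le_sum (fun b _ => hπ.1 i s b) (mem_univ a)⟩

lemma IsPolicyProfile.prod_mem_Icc (hπ : IsPolicyProfile π) (t : Finset (Fin n)) (s : S)
    (a : ∀ i, A i) : ∏ i ∈ t, π i s (a i) ∈ Set.Icc (0 : ℝ) 1 :=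
  prod_mem_Icc_zero_one fun i _ => hπ.mem_Icc i s (a i)

lemma IsPolicyProfile.sum_prod_eq_one (hπ : IsPolicyProfile π) (s : S) :
    ∑ a : ∀ i, A i, ∏ i, π i s (a i) = 1 := by
  rw [← Fintype.prod_sum fun i b => π i s b]
  exact prod_eq_one fun i _ => hπ.2 i s

lemma Rvec_mem_Icc (hr : ∀ s a, r s a ∈ Set.Icc 0 rmax) (hπ : IsPolicyProfile π) (s : S) :
    Rvec r π s ∈ Set.Icc 0 rmax :=
  (convex_Icc 0 rmax).sum_mem (fun a _ => (hπ.prod_mem_Icc univ s a).1)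
    (hπ.sum_prod_eq_one s) fun a _ => hr s a

variable [Fintype S] {T : S → (∀ i, A i) → S → ℝ}

lemma le_polDist (π π' : ∀ i : Fin n, S → A i → ℝ) (i : Fin n) (s : S) (a : A i) :
    |π i s a - π' i s a| ≤ polDist π π' :=
  calc |π i s a - π' i s a| ≤ ⨆ b, |π i s b - π' i s b| :=
        le_ciSup (f := fun b => |π i s b - π' i s b|) (Set.finite_range _).bddAbove a
    _ ≤ ⨆ t, ⨆ b, |π i t b - π' i t b| :=
        le_ciSup (f := fun t => ⨆ b, |π i t b - π' i t b|) (Set.finite_range _).bddAbove s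
    _ ≤ polDist π π' :=
        le_ciSup (f := fun j => ⨆ t, ⨆ b, |π j t b - π' j t b|) (Set.finite_range _).bddAbove i

lemma abs_prod_sub_prod_le_polDist (hπ : IsPolicyProfile π) (hπ' : IsPolicyProfile π')
    (t : Finset (Fin n)) (s : S) (a : ∀ i, A i) :
    |∏ i ∈ t, π i s (a i) - ∏ i ∈ t, π' i s (a i)| ≤ n * polDist π π' :=
  calc _ ≤ ∑ i ∈ t, |π i s (a i) - π' i s (a i)| :=
        abs_prod_sub_prod_le t (fun i _ => hπ.mem_Icc i s (a i)) fun i _ => hπ'.mem_Icc i s (a i)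
    _ ≤ ∑ _i ∈ t, polDist π π' := sum_le_sum fun i _ => le_polDist π π' i s (a i)
    _ = #t * polDist π π' := by rw [sum_const, nsmul_eq_mul]
    _ ≤ n * polDist π π' := by
        refine mul_le_mul_of_nonneg_right ?_ polDist_nonneg
        exact_mod_cast (card_le_univ t).trans (Fintype.card_fin n).le

lemma Pmat_mem_rowStochastic [DecidableEq S] (hT : IsTransition T) (hπ : IsPolicyProfile π) :
    Pmat T π ∈ rowStochastic ℝ S := by
  refine mem_rowStochastic_iff_sum.2 ⟨fun s s' => sum_nonneg fun a _ =>
    mul_nonneg (hT.1 s a s') (hπ.prod_mem_Icc univ s a).1, fun s => ?_⟩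
  simp only [Pmat]
  rw [sum_comm]
  simp only [← sum_mul, hT.2, one_mul]
  exact hπ.sum_prod_eq_one s

lemma sum_abs_Pmat_sub_Pmat_le (hT : IsTransition T) (hπ : IsPolicyProfile π)
    (hπ' : IsPolicyProfile π') (s : S) :
    ∑ s', |Pmat T π s s' - Pmat T π' s s'| ≤ Fintype.card (∀ i, A i) * n * polDist π π' :=
  calc _ ≤ ∑ s', ∑ a, T s a s' * |∏ i, π i s (a i) - ∏ i, π' i s (a i)| := by
        refine sum_le_sum fun s' _ => ?_
        simp only [Pmat, ← sum_sub_distrib, ← mul_sub]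
        refine (abs_sum_le_sum_abs _ _).trans_eq (sum_congr rfl fun a _ => ?_)
        rw [abs_mul, abs_of_nonneg (hT.1 s a s')]
    _ = ∑ a : ∀ i, A i, |∏ i, π i s (a i) - ∏ i, π' i s (a i)| := by
        rw [sum_comm]
        simp only [← sum_mul, hT.2, one_mul]
    _ ≤ ∑ _a : ∀ i, A i, n * polDist π π' :=
        sum_le_sum fun a _ => abs_prod_sub_prod_le_polDist hπ hπ' univ s a
    _ = _ := by rw [sum_const, card_univ, nsmul_eq_mul, mul_assoc]

lemma abs_Rvec_sub_Rvec_le (hr : ∀ s a, r s a ∈ Set.Icc 0 rmax) (hπ : IsPolicyProfile π)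
    (hπ' : IsPolicyProfile π') (s : S) :
    |Rvec r π s - Rvec r π' s| ≤ rmax * (Fintype.card (∀ i, A i) * n * polDist π π') :=
  calc _ = |∑ a, (∏ i, π i s (a i) - ∏ i, π' i s (a i)) * r s a| := by
        simp only [Rvec, ← sum_sub_distrib, sub_mul]
    _ ≤ ∑ _a : ∀ i, A i, n * polDist π π' * rmax := by
        refine (abs_sum_le_sum_abs _ _).trans (sum_le_sum fun a _ => ?_)
        rw [abs_mul]
        exact mul_le_mul (abs_prod_sub_prod_le_polDist hπ hπ' univ s a)
          (abs_le_of_mem_Icc (hr s a)) (abs_nonneg _) (mul_nonneg n.cast_nonneg polDist_nonneg)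
    _ = _ := by rw [sum_const, card_univ, nsmul_eq_mul]; ring

variable {p p' : S → ℝ} {c : ℝ}

lemma l1_stationary_sub_le (hT : IsTransition T) (hπ : IsPolicyProfile π)
    (hπ' : IsPolicyProfile π') (hPc' : ContractsZeroSum (Pmat T π') c) (hc1 : c < 1)
    (hp : IsDist p) (hpP : p ᵥ* Pmat T π = p) (hp' : IsDist p') (hp'P : p' ᵥ* Pmat T π' = p') :
    l1 (p - p') ≤ (1 - c)⁻¹ * (Fintype.card (∀ i, A i) * n * polDist π π') :=
  l1_sub_le_of_stationary hPc' hc1 (sum_abs_Pmat_sub_Pmat_le hT hπ hπ') hp hpP hp' hp'P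

lemma abs_Vval_sub_Vval_le (hT : IsTransition T) (hπ : IsPolicyProfile π)
    (hπ' : IsPolicyProfile π') (hPc' : ContractsZeroSum (Pmat T π') c) (hc1 : c < 1)
    (hr : ∀ s a, r s a ∈ Set.Icc 0 rmax) (hrmax : 0 ≤ rmax) (hp : IsDist p)
    (hpP : p ᵥ* Pmat T π = p) (hp' : IsDist p') (hp'P : p' ᵥ* Pmat T π' = p') :
    |Vval p (Rvec r π) - Vval p' (Rvec r π')| ≤
      ((1 - c)⁻¹ + 1) * rmax * (Fintype.card (∀ i, A i) * n * polDist π π') := by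
  refine (abs_dotProduct_sub_dotProduct_le (x := p) (x' := p')
    (fun s => abs_le_of_mem_Icc (Rvec_mem_Icc hr hπ s)) (abs_Rvec_sub_Rvec_le hr hπ hπ')).trans ?_
  rw [hp'.l1_eq_one, one_mul]
  have := mul_le_mul_of_nonneg_right (l1_stationary_sub_le hT hπ hπ' hPc' hc1 hp hpP hp' hp'P) hrmax
  linarith

variable [DecidableEq S]

lemma adv_eq (s : S) (a : ∀ i, A i) :
    adv T r π p s a =
      r s a - Vval p (Rvec r π) + deviationSum (Pmat T π) (Pi.single s 1 - p) (Rvec r π) :=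
  rfl

lemma abs_adv_le (hT : IsTransition T) (hπ : IsPolicyProfile π)
    (hPc : ContractsZeroSum (Pmat T π) c) (hc0 : 0 ≤ c) (hc1 : c < 1)
    (hr : ∀ s a, r s a ∈ Set.Icc 0 rmax) (hp : IsDist p) (s : S) (a : ∀ i, A i) :
    |adv T r π p s a| ≤ rmax * (1 + 2 * (1 - c)⁻¹) := by
  have hrmax : 0 ≤ rmax := (hr s a).1.trans (hr s a).2
  have hV : Vval p (Rvec r π) ∈ Set.Icc 0 rmax := hp.dotProduct_mem_Icc (Rvec_mem_Icc hr hπ)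
  have hdev := abs_deviationSum_le (Pmat_mem_rowStochastic hT hπ) hPc hc0 hc1
    ((isDist_single s).sum_sub_eq_zero hp) (fun s' => abs_le_of_mem_Icc (Rvec_mem_Icc hr hπ s'))
    hrmax
  rw [adv_eq]
  calc _ ≤ |r s a - Vval p (Rvec r π)| + |deviationSum (Pmat T π) (Pi.single s 1 - p) (Rvec r π)| :=
        abs_add_le _ _
    _ ≤ rmax + (1 - c)⁻¹ * (2 * rmax) := by
        refine add_le_add (abs_sub_le_of_nonneg_of_le (hr s a).1 (hr s a).2 hV.1 hV.2)
          (hdev.trans (mul_le_mul_of_nonneg_left ?_ (inv_nonneg.2 (sub_nonneg.2 hc1.le))))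
        exact mul_le_mul_of_nonneg_right ((isDist_single s).l1_sub_le_two hp) hrmax
    _ = _ := by ring

lemma abs_adv_sub_adv_le (hT : IsTransition T) (hπ : IsPolicyProfile π)
    (hπ' : IsPolicyProfile π') (hPc : ContractsZeroSum (Pmat T π) c)
    (hPc' : ContractsZeroSum (Pmat T π') c) (hc0 : 0 ≤ c) (hc1 : c < 1)
    (hr : ∀ s a, r s a ∈ Set.Icc 0 rmax) (hp : IsDist p) (hpP : p ᵥ* Pmat T π = p)
    (hp' : IsDist p') (hp'P : p' ᵥ* Pmat T π' = p') (s : S) (a : ∀ i, A i) :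
    |adv T r π p s a - adv T r π' p' s a| ≤
      ((1 - c)⁻¹ + 1 + (1 - c)⁻¹ ^ 2 * ((1 - c)⁻¹ + 4)) * rmax *
        (Fintype.card (∀ i, A i) * n * polDist π π') := by
  set δ : ℝ := Fintype.card (∀ i, A i) * n * polDist π π'
  set β := (1 - c)⁻¹
  have hrmax : 0 ≤ rmax := (hr s a).1.trans (hr s a).2
  have hδ : 0 ≤ δ := mul_nonneg (by positivity) polDist_nonneg
  have hstat := l1_stationary_sub_le hT hπ hπ' hPc' hc1 hp hpP hp' hp'P
  have hx' : l1 (Pi.single s 1 - p') ≤ 2 := (isDist_single s).l1_sub_le_two hp'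
  have hdev : |deviationSum (Pmat T π) (Pi.single s 1 - p) (Rvec r π) -
      deviationSum (Pmat T π') (Pi.single s 1 - p') (Rvec r π')| ≤
        β ^ 2 * ((β * δ + δ * 2) * rmax + 2 * (rmax * δ)) := by
    refine (abs_deviationSum_sub_le (Pmat_mem_rowStochastic hT hπ)
      (Pmat_mem_rowStochastic hT hπ') hPc hPc' hc0 hc1 hδ (sum_abs_Pmat_sub_Pmat_le hT hπ hπ')
      ((isDist_single s).sum_sub_eq_zero hp) ((isDist_single s).sum_sub_eq_zero hp')
      (fun s' => abs_le_of_mem_Icc (Rvec_mem_Icc hr hπ s'))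
      (fun s' => abs_le_of_mem_Icc (Rvec_mem_Icc hr hπ' s')) hrmax
      (abs_Rvec_sub_Rvec_le hr hπ hπ') (mul_nonneg hrmax hδ)).trans ?_
    rw [sub_sub_sub_cancel_left, l1_sub_comm]
    gcongr
  rw [adv_eq, adv_eq, show ∀ u v v' w w' : ℝ, u - v + w - (u - v' + w') = -(v - v') + (w - w')
    from fun _ _ _ _ _ => by ring]
  calc _ ≤ |Vval p (Rvec r π) - Vval p' (Rvec r π')| +
        |deviationSum (Pmat T π) (Pi.single s 1 - p) (Rvec r π) -
          deviationSum (Pmat T π') (Pi.single s 1 - p') (Rvec r π')| :=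
        (abs_add_le _ _).trans_eq (by rw [abs_neg])
    _ ≤ (β + 1) * rmax * δ + β ^ 2 * ((β * δ + δ * 2) * rmax + 2 * (rmax * δ)) :=
        add_le_add (abs_Vval_sub_Vval_le hT hπ hπ' hPc' hc1 hr hrmax hp hpP hp' hp'P) hdev
    _ = _ := by ring

variable [∀ i, DecidableEq (A i)]

lemma abs_avgAdv_le (hπ : IsPolicyProfile π) {s : S} {B : ℝ} (hB : ∀ a, |adv T r π p s a| ≤ B)
    (i : Fin n) (ai : A i) : |avgAdv T r π p i s ai| ≤ Fintype.card (∀ j, A j) * B := by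
  refine (abs_sum_le_sum_abs _ _).trans ((sum_le_card_nsmul _ _ _ fun a _ => ?_).trans_eq
    (by rw [card_univ, nsmul_eq_mul]))
  split_ifs
  · rw [abs_mul]
    exact (mul_le_of_le_one_left (abs_nonneg _) (abs_le_of_mem_Icc (hπ.prod_mem_Icc _ s a))).trans
      (hB a)
  · rw [abs_zero]; exact (abs_nonneg _).trans (hB a)

lemma abs_avgAdv_sub_avgAdv_le (hπ : IsPolicyProfile π) (hπ' : IsPolicyProfile π') {s : S}
    {B E : ℝ} (hB : ∀ a, |adv T r π p s a| ≤ B)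
    (hE : ∀ a, |adv T r π p s a - adv T r π' p' s a| ≤ E)
    (i : Fin n) (ai : A i) :
    |avgAdv T r π p i s ai - avgAdv T r π' p' i s ai| ≤
      Fintype.card (∀ j, A j) * (n * polDist π π' * B + E) := by
  rw [avgAdv, avgAdv, ← sum_sub_distrib]
  refine (abs_sum_le_sum_abs _ _).trans ((sum_le_card_nsmul _ _ _ fun a _ => ?_).trans_eq
    (by rw [card_univ, nsmul_eq_mul]))
  split_ifs
  · calc _ ≤ _ := abs_mul_sub_mul_le _ _ _ _
      _ ≤ n * polDist π π' * B + 1 * E :=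
          add_le_add (mul_le_mul (abs_prod_sub_prod_le_polDist hπ hπ' _ s a) (hB a)
            (abs_nonneg _) (mul_nonneg n.cast_nonneg polDist_nonneg))
            (mul_le_mul (abs_le_of_mem_Icc (hπ'.prod_mem_Icc _ s a)) (hE a) (abs_nonneg _)
              zero_le_one)
      _ = _ := by rw [one_mul]
  · rw [sub_self, abs_zero]
    exact add_nonneg (mul_nonneg (mul_nonneg n.cast_nonneg polDist_nonneg)
      ((abs_nonneg _).trans (hB a))) ((abs_nonneg _).trans (hE a))

/-- `k` is the number of joint actions and `β = (1 - c)⁻¹ ≥ ∑ₜ cᵗ`, where `c` is the contraction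
factor of uniform mixing. -/
def gradientLipschitzConst (k n : ℕ) (rmax β : ℝ) : ℝ :=
  k * (β * k * n + n) * rmax * (1 + 2 * β) + k * (β + 1 + β ^ 2 * (β + 4)) * rmax * k * n

lemma abs_payoffGradient_sub_le (hT : IsTransition T) (hπ : IsPolicyProfile π)
    (hπ' : IsPolicyProfile π') (hPc : ContractsZeroSum (Pmat T π) c)
    (hPc' : ContractsZeroSum (Pmat T π') c) (hc0 : 0 ≤ c) (hc1 : c < 1)
    (hr : ∀ s a, r s a ∈ Set.Icc 0 rmax) (hp : IsDist p) (hpP : p ᵥ* Pmat T π = p)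
    (hp' : IsDist p') (hp'P : p' ᵥ* Pmat T π' = p') (i : Fin n) (s : S) (ai : A i) :
    |p s * avgAdv T r π p i s ai - p' s * avgAdv T r π' p' i s ai| ≤
      gradientLipschitzConst (Fintype.card (∀ j, A j)) n rmax (1 - c)⁻¹ * polDist π π' := by
  have hstat := (abs_le_l1 (p - p') s).trans
    (l1_stationary_sub_le hT hπ hπ' hPc' hc1 hp hpP hp' hp'P)
  have hB := abs_adv_le hT hπ hPc hc0 hc1 hr hp s
  have havg := abs_avgAdv_le hπ hB i ai
  have havg' := abs_avgAdv_sub_avgAdv_le hπ hπ' hB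
    (abs_adv_sub_adv_le hT hπ hπ' hPc hPc' hc0 hc1 hr hp hpP hp' hp'P s) i ai
  calc _ ≤ |p s - p' s| * |avgAdv T r π p i s ai| +
        |p' s| * |avgAdv T r π p i s ai - avgAdv T r π' p' i s ai| := abs_mul_sub_mul_le _ _ _ _
    _ ≤ _ * _ + 1 * _ :=
        add_le_add (mul_le_mul hstat havg (abs_nonneg _) ((abs_nonneg _).trans hstat))
          (mul_le_mul ((abs_le_l1 p' s).trans hp'.l1_eq_one.le) havg' (abs_nonneg _) zero_le_one)
    _ = _ := by unfold gradientLipschitzConst; ring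

end Game

theorem payoff_gradient_lipschitz_general
    (rmax τ : ℝ) (hτ : 0 < τ) :
    ∃ L > (0 : ℝ),
      ∀ T : S → (∀ i, A i) → S → ℝ, IsTransition T → Mixing T τ →
      ∀ r : Fin n → S → (∀ i, A i) → ℝ, (∀ i s a, r i s a ∈ Set.Icc (0 : ℝ) rmax) →
      ∀ π π' : ∀ i : Fin n, S → A i → ℝ, IsPolicyProfile π → IsPolicyProfile π' →
      ∀ p p' : S → ℝ, IsDist p → p ᵥ* Pmat T π = p →
        IsDist p' → p' ᵥ* Pmat T π' = p' →
      ∀ (i : Fin n) (s : S) (ai : A i),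
        |p s * avgAdv T (r i) π p i s ai - p' s * avgAdv T (r i) π' p' i s ai| ≤
          L * polDist π π' := by
  set c := Real.exp (-(1 / τ))
  have hc1 : c < 1 := Real.exp_lt_one_iff.2 (neg_neg_of_pos (one_div_pos.2 hτ))
  refine ⟨max (gradientLipschitzConst (Fintype.card (∀ i, A i)) n rmax (1 - c)⁻¹) 1,
    lt_max_of_lt_right one_pos, ?_⟩
  intro T hT hmix r hr π π' hπ hπ' p p' hp hpP hp' hp'P i s ai
  exact (abs_payoffGradient_sub_le hT hπ hπ' (contractsZeroSum_of_isDist (hmix π hπ))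
    (contractsZeroSum_of_isDist (hmix π' hπ')) (Real.exp_pos _).le hc1 (hr i) hp hpP hp' hp'P
    i s ai).trans (mul_le_mul_of_nonneg_right (le_max_left _ _) polDist_nonneg)

/-- Lipschitz continuity of the components of the individual payoff gradient
`v_i(π)(s,a_i) = p_π(s) \bar adv^π_i(s,a_i)`, with a constant depending only on
`n`, `S`, `A`, `r_max` and `τ`. -/
theorem payoff_gradient_lipschitz
    (rmax τ : ℝ) (hrmax : 0 ≤ rmax) (hτ : 0 < τ) :
    ∃ L > (0 : ℝ),
      ∀ T : S → (∀ i, A i) → S → ℝ, IsTransition T → Mixing T τ →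
      ∀ r : Fin n → S → (∀ i, A i) → ℝ, (∀ i s a, r i s a ∈ Set.Icc (0 : ℝ) rmax) →
      ∀ π π' : ∀ i : Fin n, S → A i → ℝ, IsPolicyProfile π → IsPolicyProfile π' →
      ∀ p p' : S → ℝ, IsDist p → p ᵥ* Pmat T π = p →
        IsDist p' → p' ᵥ* Pmat T π' = p' →
      ∀ (i : Fin n) (s : S) (ai : A i),
        |p s * avgAdv T (r i) π p i s ai - p' s * avgAdv T (r i) π' p' i s ai| ≤
          L * polDist π π' :=
  payoff_gradient_lipschitz_general rmax τ hτ

end
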